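/- Let G be an undirected graph with tw(G)+1 ≤ k, i.e., k cops have a monotone winning strategy against one visible robber. Then for every r ≥ 1, r·k cops have a monotone winning strategy against r robbers on G; i.e., tw_r(G)+1 ≤ r·(tw(G)+1). -/

import Mathlib

/-- Vertices reachable from `v` in `G − X`: along edges whose targets avoid `X`. -/
def reachAvoid {V : Type*} (E : V → V → Prop) (X : Set V) (v : V) : Set V :=
  {w | Relation.ReflTransGen (fun a b => E a b ∧ b ∉ X) v w}

/-- Monotone win of `k` cops against one visible robber (tree-width game when
`E` is symmetric): `tw(G) + 1 ≤ k` iff `k` cops win from every position. -/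
inductive MonCopsWin {V : Type*} (E : V → V → Prop) (k : ℕ) : Set V → V → Prop
  | step (U : Set V) (v : V) (U' : Set V) (hfin : U'.Finite) (hcard : U'.ncard ≤ k)
      (hmon : ∀ u ∈ U \ U', u ∉ reachAvoid E (U ∩ U') v)
      (h : ∀ v' ∈ reachAvoid E (U ∩ U') v, v' ∉ U' → MonCopsWin E k U' v') :
      MonCopsWin E k U v

/-- Monotone win of `k` cops against (at most) `r` robbers that move along
cop-free paths and may jump to each other. -/
inductive MonCopsWinMulti {V : Type*} (E : V → V → Prop) (k r : ℕ) : Set V → Set V → Prop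
  | captured (U : Set V) : MonCopsWinMulti E k r U ∅
  | step (U R U' : Set V) (hfin : U'.Finite) (hcard : U'.ncard ≤ k)
      (hmon : ∀ u ∈ U \ U', ∀ x ∈ R, u ∉ reachAvoid E (U ∩ U') x)
      (h : ∀ R' : Set V, R'.Finite → R'.ncard ≤ r → R' ∩ U' = ∅ →
            (∀ y ∈ R', ∃ x ∈ R, y ∈ reachAvoid E (U ∩ U') x) →
            MonCopsWinMulti E k r U' R') :
      MonCopsWinMulti E k r U R


/-!
A single-robber strategy can be normalised so that the cops only stand in the closed
neighbourhood of the robber's territory (his component of `G − U`) and never lift a cop from its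
boundary. Against `r` robbers, each robber is chased by a team of `k` cops playing such a strategy,
robbers in a common territory sharing a team. As `E` is symmetric, distinct territories are
disjoint, and a team's cops outside its own territory lie on its boundary, which is occupied
already; so the teams never interfere and the union of their moves is a legal monotone move of at
most `r · k` cops. Induction on an ordinal rank bounding all the strategies in play ends the game.
-/

universe u

section Reach

variable {V : Type u} {E : V → V → Prop}

def closedNbhd (E : V → V → Prop) (S : Set V) : Set V := S ∪ {u | ∃ w ∈ S, E w u}

theorem subset_closedNbhd (S : Set V) : S ⊆ closedNbhd E S := Set.subset_union_left

theorem closedNbhd_mono {S T : Set V} (h : S ⊆ T) : closedNbhd E S ⊆ closedNbhd E T :=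
  Set.union_subset_union h fun _ ⟨w, hw, hwu⟩ => ⟨w, h hw, hwu⟩

theorem mem_reachAvoid_self (X : Set V) (v : V) : v ∈ reachAvoid E X v :=
  Relation.ReflTransGen.refl

theorem reachAvoid_anti {X Y : Set V} (h : X ⊆ Y) (v : V) :
    reachAvoid E Y v ⊆ reachAvoid E X v := fun _ =>
  Relation.ReflTransGen.mono (fun _ _ hab => ⟨hab.1, fun hb => hab.2 (h hb)⟩) _ _

theorem reachAvoid_subset_of_mem {X : Set V} {v w : V} (hw : w ∈ reachAvoid E X v) :
    reachAvoid E X w ⊆ reachAvoid E X v := fun _ => hw.trans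

theorem disjoint_reachAvoid {X : Set V} {v : V} (hv : v ∉ X) :
    Disjoint (reachAvoid E X v) X := by
  refine Set.disjoint_left.2 fun w hw => ?_
  induction hw with
  | refl => exact hv
  | tail _ hbc _ => exact hbc.2

theorem reachAvoid_subset_of_closedNbhd_diff_subset {X S : Set V} {v : V} (hv : v ∈ S)
    (hS : closedNbhd E S \ X ⊆ S) : reachAvoid E X v ⊆ S := by
  intro w hw
  induction hw with
  | refl => exact hv
  | tail _ hbc ih => exact hS ⟨Or.inr ⟨_, ih, hbc.1⟩, hbc.2⟩

theorem closedNbhd_reachAvoid_diff_subset (X : Set V) (v : V) :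
    closedNbhd E (reachAvoid E X v) \ X ⊆ reachAvoid E X v := by
  rintro _ ⟨hu | ⟨w, hw, hwu⟩, huX⟩
  exacts [hu, hw.tail ⟨hwu, huX⟩]

theorem reachAvoid_subset_of_frontier {X Y : Set V} {v w : V} (hw : w ∈ reachAvoid E X v)
    (h : X ∩ closedNbhd E (reachAvoid E X v) ⊆ Y) :
    reachAvoid E Y w ⊆ reachAvoid E X v :=
  reachAvoid_subset_of_closedNbhd_diff_subset hw fun _ ⟨hu, huY⟩ =>
    closedNbhd_reachAvoid_diff_subset X v ⟨hu, fun huX => huY (h ⟨huX, hu⟩)⟩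

theorem mem_reachAvoid_comm (hsym : Symmetric E) {X : Set V} {v w : V} (hv : v ∉ X)
    (hw : w ∈ reachAvoid E X v) : v ∈ reachAvoid E X w := by
  induction hw with
  | refl => exact mem_reachAvoid_self X v
  | tail hb hbc ih =>
    exact .head ⟨hsym hbc.1, Set.disjoint_left.1 (disjoint_reachAvoid hv) hb⟩ ih

theorem reachAvoid_eq_of_not_disjoint (hsym : Symmetric E) {X : Set V} {v w : V}
    (hv : v ∉ X) (hw : w ∉ X) (h : ¬Disjoint (reachAvoid E X v) (reachAvoid E X w)) :
    reachAvoid E X v = reachAvoid E X w := by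
  obtain ⟨u, hvu, hwu⟩ := Set.not_disjoint_iff.1 h
  exact ((reachAvoid_subset_of_mem (mem_reachAvoid_comm hsym hv hvu)).trans
      (reachAvoid_subset_of_mem hwu)).antisymm
    ((reachAvoid_subset_of_mem (mem_reachAvoid_comm hsym hw hwu)).trans
      (reachAvoid_subset_of_mem hvu))

end Reach

theorem Ordinal.exists_forall_exists_lt {ι : Type u} {s : Set ι} {P : ι → Ordinal.{u} → Prop}
    (h : ∀ i ∈ s, ∃ α, P i α) : ∃ μ, ∀ i ∈ s, ∃ α < μ, P i α := by
  choose! f hf using h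
  exact ⟨⨆ i, f i + 1, fun i hi => ⟨f i, Ordinal.lt_iSup_add_one f i, hf i hi⟩⟩

theorem Set.Finite.ncard_biUnion_le_mul {ι α : Type*} {t : Set ι} (ht : t.Finite)
    {s : ι → Set α} {k : ℕ} (h : ∀ i ∈ t, (s i).ncard ≤ k) :
    (⋃ i ∈ t, s i).ncard ≤ t.ncard * k := by
  calc (⋃ i ∈ t, s i).ncard = (⋃ i ∈ ht.toFinset, s i).ncard := by simp
    _ ≤ ∑ i ∈ ht.toFinset, (s i).ncard := ht.toFinset.set_ncard_biUnion_le s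
    _ ≤ ∑ _ ∈ ht.toFinset, k := Finset.sum_le_sum fun i hi => h i (ht.mem_toFinset.1 hi)
    _ = t.ncard * k := by simp [Set.ncard_eq_toFinset_card t ht]

section LocalGame

variable {V : Type u} (E : V → V → Prop) (k : ℕ)

/-- Monotone single-robber strategies in normal form: cops are placed only next to the territory
`reachAvoid E W v`, and the cops on its boundary stay, which is what monotonicity amounts to.
The ordinal rank lets several such strategies be run side by side. -/
inductive LocalWin : Ordinal.{u} → Set V → V → Prop
  | step {α β : Ordinal.{u}} {W : Set V} {v : V} (M : Set V) (hβ : β < α) (hfin : M.Finite)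
      (hcard : M.ncard ≤ k) (hloc : M ⊆ closedNbhd E (reachAvoid E W v))
      (hfront : W ∩ closedNbhd E (reachAvoid E W v) ⊆ M)
      (h : ∀ v' ∈ reachAvoid E W v, v' ∉ M → LocalWin β M v') :
      LocalWin α W v

structure IsWinningMove (α : Ordinal.{u}) (W T M : Set V) : Prop where
  finite : M.Finite
  ncard_le : M.ncard ≤ k
  subset_closedNbhd : M ⊆ closedNbhd E T
  frontier_subset : W ∩ closedNbhd E T ⊆ M
  exists_lt : ∃ β < α, ∀ v' ∈ T, v' ∉ M → LocalWin E k β M v'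

/-- The choice depends only on the cop set and the territory, so that robbers sharing a territory
are answered with the same move. -/
noncomputable def chosenMove (α : Ordinal.{u}) (W T : Set V) : Set V :=
  Classical.epsilon (IsWinningMove E k α W T)

variable {E k}

theorem LocalWin.mono {α α' : Ordinal.{u}} {W : Set V} {v : V} (h : LocalWin E k α W v)
    (hα : α ≤ α') : LocalWin E k α' W v := by
  cases h with
  | step M hβ hfin hcard hloc hfront h =>
    exact .step M (hβ.trans_le hα) hfin hcard hloc hfront h

theorem LocalWin.isWinningMove_chosenMove {α : Ordinal.{u}} {W : Set V} {v : V}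
    (h : LocalWin E k α W v) :
    IsWinningMove E k α W (reachAvoid E W v) (chosenMove E k α W (reachAvoid E W v)) := by
  cases h with
  | step M hβ hfin hcard hloc hfront h =>
    exact Classical.epsilon_spec ⟨M, hfin, hcard, hloc, hfront, _, hβ, h⟩

theorem LocalWin.exists_lt_forall {R : Set V} (hR : R.Finite) (hne : R.Nonempty)
    {W : V → Set V} {μ : Ordinal.{u}} (h : ∀ x ∈ R, ∃ β < μ, LocalWin E k β (W x) x) :
    ∃ μ' < μ, ∀ x ∈ R, LocalWin E k μ' (W x) x := by
  choose! ρ hρ hwin using h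
  obtain ⟨a, ha, hmax⟩ := Set.exists_max_image R ρ hR hne
  exact ⟨ρ a, hρ a ha, fun x hx => (hwin x hx).mono (hmax x hx)⟩

theorem MonCopsWin.exists_localWin {U : Set V} {v : V} (h : MonCopsWin E k U v)
    {W : Set V} (hUW : U ∩ closedNbhd E (reachAvoid E U v) ⊆ W) (hWU : W ⊆ U) :
    ∃ α, LocalWin E k α W v := by
  induction h generalizing W with
  | step U v U' hfin hcard hmon _ ih =>
  set T := reachAvoid E U v
  have hTW : reachAvoid E W v = T :=
    (reachAvoid_subset_of_frontier (mem_reachAvoid_self U v) hUW).antisymm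
      (reachAvoid_anti hWU v)
  -- a lifted boundary cop would be adjacent to the territory, hence reachable
  have hfrontU : U ∩ closedNbhd E T ⊆ U' := by
    rintro u ⟨huU, huT⟩
    by_contra huU'
    have huT' : u ∈ closedNbhd E (reachAvoid E (U ∩ U') v) :=
      closedNbhd_mono (reachAvoid_anti Set.inter_subset_left v) huT
    exact hmon u ⟨huU, huU'⟩ (closedNbhd_reachAvoid_diff_subset _ v ⟨huT', (huU' ·.2)⟩)
  have hC : reachAvoid E (U ∩ U') v = T :=
    (reachAvoid_subset_of_frontier (mem_reachAvoid_self U v)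
      (Set.subset_inter Set.inter_subset_left hfrontU)).antisymm
      (reachAvoid_anti Set.inter_subset_left v)
  set M := U' ∩ closedNbhd E T
  have hchild : ∀ v' ∈ reachAvoid E W v \ M, ∃ α, LocalWin E k α M v' := by
    rintro v' ⟨hv', hv'M⟩
    rw [hTW, ← hC] at hv'
    have hv'U' : v' ∉ U' := fun h => hv'M ⟨h, subset_closedNbhd T (hC ▸ hv')⟩
    refine ih v' hv' hv'U' (Set.inter_subset_inter_right _ (closedNbhd_mono ?_))
      Set.inter_subset_left
    calc reachAvoid E U' v' ⊆ reachAvoid E (U ∩ U') v' :=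
          reachAvoid_anti Set.inter_subset_right v'
      _ ⊆ T := hC ▸ reachAvoid_subset_of_mem hv'
  obtain ⟨β, hβ⟩ := Ordinal.exists_forall_exists_lt hchild
  refine ⟨β + 1, .step M (Order.lt_add_one_iff.2 le_rfl) (hfin.subset Set.inter_subset_left)
    ((Set.ncard_le_ncard Set.inter_subset_left hfin).trans hcard) ?_ ?_
    fun v' hv' hv'M => ?_⟩
  · rw [hTW]; exact Set.inter_subset_right
  · rw [hTW]; exact fun u hu => ⟨hfrontU ⟨hWU hu.1, hu.2⟩, hu.2⟩
  · obtain ⟨α, hα, hwin⟩ := hβ v' ⟨hv', hv'M⟩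
    exact hwin.mono hα.le

end LocalGame

section Teams

variable {V : Type u} (E : V → V → Prop) (k : ℕ) (μ : Ordinal.{u})

/-- `W x` is the cop set of the team chasing robber `x`. -/
structure IsTeamAssignment (U R : Set V) (W : V → Set V) : Prop where
  subset : ∀ x ∈ R, W x ⊆ U
  disjoint : ∀ x ∈ R, Disjoint (reachAvoid E (W x) x) U
  eq_of_not_disjoint : ∀ x ∈ R, ∀ z ∈ R,
    ¬Disjoint (reachAvoid E (W x) x) (reachAvoid E (W z) z) → W x = W z

theorem isTeamAssignment_empty (R : Set V) : IsTeamAssignment E ∅ R fun _ => ∅ :=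
  ⟨fun _ _ => subset_rfl, fun _ _ => Set.disjoint_empty _, fun _ _ _ _ _ => rfl⟩

noncomputable def teamMove (W : V → Set V) (x : V) : Set V :=
  chosenMove E k μ (W x) (reachAvoid E (W x) x)

noncomputable def copMove (R : Set V) (W : V → Set V) : Set V :=
  ⋃ x ∈ R, teamMove E k μ W x

variable {E k μ} {U R : Set V} {W : V → Set V}

theorem IsTeamAssignment.notMem (hT : IsTeamAssignment E U R W) {x : V} (hx : x ∈ R) :
    x ∉ U :=
  Set.disjoint_left.1 (hT.disjoint x hx) (mem_reachAvoid_self _ x)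

theorem IsTeamAssignment.teamMove_eq (hsym : Symmetric E) (hT : IsTeamAssignment E U R W)
    {x z : V} (hx : x ∈ R) (hz : z ∈ R)
    (h : ¬Disjoint (reachAvoid E (W x) x) (reachAvoid E (W z) z)) :
    teamMove E k μ W x = teamMove E k μ W z := by
  have hW := hT.eq_of_not_disjoint x hx z hz h
  rw [← hW] at h
  have hxW : x ∉ W x := fun hxW => hT.notMem hx (hT.subset x hx hxW)
  have hzW : z ∉ W x := fun hzW => hT.notMem hz (hT.subset x hx hzW)
  rw [teamMove, teamMove, reachAvoid_eq_of_not_disjoint hsym hxW hzW h, hW]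

theorem IsTeamAssignment.reachAvoid_copMove_subset (hT : IsTeamAssignment E U R W)
    (hwin : ∀ x ∈ R, LocalWin E k μ (W x) x) {x : V} (hx : x ∈ R) :
    reachAvoid E (U ∩ copMove E k μ R W) x ⊆ reachAvoid E (W x) x :=
  reachAvoid_subset_of_frontier (mem_reachAvoid_self _ x) fun _ hu =>
    ⟨hT.subset x hx hu.1,
      Set.mem_biUnion hx ((hwin x hx).isWinningMove_chosenMove.frontier_subset hu)⟩

theorem IsTeamAssignment.notMem_reachAvoid_copMove (hT : IsTeamAssignment E U R W)
    (hwin : ∀ x ∈ R, LocalWin E k μ (W x) x) :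
    ∀ u ∈ U \ copMove E k μ R W, ∀ x ∈ R,
      u ∉ reachAvoid E (U ∩ copMove E k μ R W) x :=
  fun _ hu x hx hux =>
    Set.disjoint_left.1 (hT.disjoint x hx) (hT.reachAvoid_copMove_subset hwin hx hux) hu.1

theorem copMove_finite (hR : R.Finite) (hwin : ∀ x ∈ R, LocalWin E k μ (W x) x) :
    (copMove E k μ R W).Finite :=
  hR.biUnion fun x hx => (hwin x hx).isWinningMove_chosenMove.finite

theorem ncard_copMove_le (hR : R.Finite) (hwin : ∀ x ∈ R, LocalWin E k μ (W x) x) :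
    (copMove E k μ R W).ncard ≤ R.ncard * k :=
  hR.ncard_biUnion_le_mul fun x hx => (hwin x hx).isWinningMove_chosenMove.ncard_le

theorem notMem_teamMove_of_disjoint {R' : Set V} (hR' : Disjoint R' (copMove E k μ R W))
    {x y : V} (hx : x ∈ R) (hy : y ∈ R') : y ∉ teamMove E k μ W x :=
  fun h => Set.disjoint_left.1 hR' hy (Set.mem_biUnion hx h)

theorem IsTeamAssignment.heirs (hsym : Symmetric E) (hT : IsTeamAssignment E U R W)
    (hwin : ∀ x ∈ R, LocalWin E k μ (W x) x) {R' : Set V} {p : V → V}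
    (hp : ∀ y ∈ R', p y ∈ R ∧ y ∈ reachAvoid E (U ∩ copMove E k μ R W) (p y))
    (hR' : Disjoint R' (copMove E k μ R W)) :
    IsTeamAssignment E (copMove E k μ R W) R' fun y => teamMove E k μ W (p y) := by
  have hsub : ∀ y ∈ R',
      reachAvoid E (teamMove E k μ W (p y)) y ⊆ reachAvoid E (W (p y)) (p y) := fun y hy =>
    reachAvoid_subset_of_frontier (hT.reachAvoid_copMove_subset hwin (hp y hy).1 (hp y hy).2)
      (hwin _ (hp y hy).1).isWinningMove_chosenMove.frontier_subset
  refine ⟨fun y hy => Set.subset_biUnion_of_mem (u := teamMove E k μ W) (hp y hy).1,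
    fun y hy => Set.disjoint_left.2 fun u hu huU' => ?_, fun y₁ hy₁ y₂ hy₂ h =>
      hT.teamMove_eq hsym (hp y₁ hy₁).1 (hp y₂ hy₂).1 fun hd =>
        h (hd.mono (hsub y₁ hy₁) (hsub y₂ hy₂))⟩
  obtain ⟨z, hz, huz⟩ := Set.mem_iUnion₂.1 huU'
  by_cases hzy : Disjoint (reachAvoid E (W z) z) (reachAvoid E (W (p y)) (p y))
  · -- `u` lies next to the territory of `z` but outside the cop set `U`, hence inside it
    have huW : u ∉ W z := fun huW =>
      Set.disjoint_left.1 (hT.disjoint _ (hp y hy).1) (hsub y hy hu) (hT.subset z hz huW)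
    have huT : u ∈ reachAvoid E (W z) z := closedNbhd_reachAvoid_diff_subset _ _
      ⟨(hwin z hz).isWinningMove_chosenMove.subset_closedNbhd huz, huW⟩
    exact Set.disjoint_left.1 hzy huT (hsub y hy hu)
  · rw [hT.teamMove_eq hsym hz (hp y hy).1 hzy] at huz
    exact Set.disjoint_left.1
      (disjoint_reachAvoid (notMem_teamMove_of_disjoint hR' (hp y hy).1 hy)) hu huz

theorem IsTeamAssignment.exists_lt_localWin_heirs (hT : IsTeamAssignment E U R W)
    (hwin : ∀ x ∈ R, LocalWin E k μ (W x) x) {R' : Set V} {p : V → V}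
    (hp : ∀ y ∈ R', p y ∈ R ∧ y ∈ reachAvoid E (U ∩ copMove E k μ R W) (p y))
    (hR' : Disjoint R' (copMove E k μ R W)) :
    ∀ y ∈ R', ∃ β < μ, LocalWin E k β (teamMove E k μ W (p y)) y := by
  intro y hy
  obtain ⟨β, hβ, hchild⟩ := (hwin _ (hp y hy).1).isWinningMove_chosenMove.exists_lt
  exact ⟨β, hβ, hchild y (hT.reachAvoid_copMove_subset hwin (hp y hy).1 (hp y hy).2)
    (notMem_teamMove_of_disjoint hR' (hp y hy).1 hy)⟩

theorem IsTeamAssignment.monCopsWinMulti (hsym : Symmetric E) {r : ℕ} (hR : R.Finite)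
    (hRr : R.ncard ≤ r) (hT : IsTeamAssignment E U R W)
    (hwin : ∀ x ∈ R, ∃ β < μ, LocalWin E k β (W x) x) :
    MonCopsWinMulti E (r * k) r U R := by
  induction μ using WellFoundedLT.induction generalizing U R W with
  | _ μ ih =>
  rcases R.eq_empty_or_nonempty with rfl | hne
  · exact .captured U
  obtain ⟨μ', hμ', hwin'⟩ := LocalWin.exists_lt_forall hR hne hwin
  refine .step U R (copMove E k μ' R W) (copMove_finite hR hwin')
    ((ncard_copMove_le hR hwin').trans (Nat.mul_le_mul_right k hRr))
    (hT.notMem_reachAvoid_copMove hwin') fun R' hR'fin hR'r hR'U' hheir => ?_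
  have : Nonempty V := ⟨hne.some⟩
  choose! p hp using hheir
  have hdisj := Set.disjoint_iff_inter_eq_empty.2 hR'U'
  exact ih μ' hμ' hR'fin hR'r (hT.heirs hsym hwin' hp hdisj)
    (hT.exists_lt_localWin_heirs hwin' hp hdisj)

end Teams

theorem treewidth_multi_robbers_general {V : Type*} (E : V → V → Prop) (hsym : Symmetric E)
    (k : ℕ) (hwin : ∀ v : V, MonCopsWin E k ∅ v) (r : ℕ) :
    ∀ R : Set V, R.Finite → R.ncard ≤ r → MonCopsWinMulti E (r * k) r ∅ R := by
  intro R hR hRr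
  have hlocal : ∀ x ∈ R, ∃ α, LocalWin E k α ∅ x := fun x _ =>
    (hwin x).exists_localWin (Set.empty_inter _).subset subset_rfl
  obtain ⟨μ, hμ⟩ := Ordinal.exists_forall_exists_lt hlocal
  exact (isTeamAssignment_empty E R).monCopsWinMulti hsym hR hRr hμ

/-- **Lemma `lemma_Rtreewidth`:** on an undirected graph `G` with
`tw(G) + 1 ≤ k` (i.e. `k` cops monotonically capture one visible robber),
for every `r ≥ 1` the `r·k` cops monotonically capture `r` robbers;
i.e. `tw_r(G) + 1 ≤ r · (tw(G) + 1)`. -/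
theorem treewidth_multi_robbers {V : Type*} (E : V → V → Prop) (hsym : Symmetric E)
    (k : ℕ) (hwin : ∀ v : V, MonCopsWin E k ∅ v) (r : ℕ) (hr : 1 ≤ r) :
    ∀ R : Set V, R.Finite → R.ncard ≤ r → MonCopsWinMulti E (r * k) r ∅ R :=
  treewidth_multi_robbers_general E hsym k hwin r
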